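/- arXiv:1606.07703 — 4 statements merged into one kernel-verified Lean document; each statement's English description precedes it below -/
import Mathlib

section
/- There exists a constant C < ∞ such that for every vertical subgroup W of ℍ and every set A ⊆ ℍ, the Lebesgue measure of the vertical projection satisfies ℒ²(π_W(A)) ≤ C·ℋ³(A), where ℋ³ is the 3-dimensional Hausdorff measure with respect to d_ℍ. -/
open MeasureTheory ENNReal

/-- The first Heisenberg group, identified with `ℂ × ℝ`. -/
abbrev HeisC : Type := ℂ × ℝ

/-- The Heisenberg product on `ℂ × ℝ`. -/
noncomputable def hmulC (p q : HeisC) : HeisC :=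
  (p.1 + q.1, p.2 + q.2 + ((starRingEnd ℂ) p.1 * q.1).im / 2)

/-- The Heisenberg inverse. -/
noncomputable def hinvC (p : HeisC) : HeisC := (-p.1, -p.2)

/-- The homogeneous norm `‖(z,t)‖ = max {|z|, |t|^{1/2}}`. -/
noncomputable def hnormC (p : HeisC) : ℝ := max (‖p.1‖) (Real.sqrt |p.2|)

/-- The Heisenberg distance `d_ℍ(p,q) = ‖q⁻¹ · p‖`. -/
noncomputable def dHC (p q : HeisC) : ℝ := hnormC (hmulC (hinvC q) p)

/-- Diameter of a set with respect to `d_ℍ`, valued in `ℝ≥0∞`. -/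
noncomputable def ediamH (S : Set HeisC) : ℝ≥0∞ :=
  ⨆ p ∈ S, ⨆ q ∈ S, ENNReal.ofReal (dHC p q)

/-- The `3`-dimensional Hausdorff measure on `ℍ` with respect to `d_ℍ`. -/
noncomputable def H3 (A : Set HeisC) : ℝ≥0∞ :=
  ⨆ (δ : ℝ) (_ : 0 < δ),
    ⨅ (U : ℕ → Set HeisC) (_ : A ⊆ ⋃ n, U n)
      (_ : ∀ n, ediamH (U n) ≤ ENNReal.ofReal δ),
      ∑' n, ediamH (U n) ^ 3

/-- Coordinate of the horizontal part of `p` along the unit vector `v`. -/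
noncomputable def sC (v : ℂ) (p : HeisC) : ℝ := ((starRingEnd ℂ) v * p.1).re

/-- Coordinate of the horizontal part of `p` along `i·v`. -/
noncomputable def uC (v : ℂ) (p : HeisC) : ℝ := ((starRingEnd ℂ) (Complex.I * v) * p.1).re

/-- The vertical projection onto `W = (ℝ·v) × ℝ`, in the coordinates `(s,t)` which identify
`W` with `ℝ²`. -/
noncomputable def piWcoord (v : ℂ) (p : HeisC) : ℝ × ℝ :=
  (sC v p, p.2 - sC v p * uC v p / 2)

/-! A set `S` of `d_ℍ`-diameter `d` lies in the ball `B(q, d)` around any of its points `q`.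
Rotating `v` to `1`, a point `p` of that ball has horizontal coordinates `(s, u)` within `d` of
those of `q`, and its projected height `t - s u / 2` differs from the affine function
`s ↦ t_q - s_q u_q / 2 + (s_q - s) u_q` by the vertical defect of `q⁻¹ p` (at most `d²`) plus
`(s_q - s)(u - u_q) / 2` (at most `d² / 2`). So `π_W(S)` lies in a sheared rectangle of area
`2d · 3d²`, whence `ℒ²(π_W(S)) ≤ 6 diam(S)³`; countable subadditivity over covers gives
`C = 6`. -/

open Metric Set ComplexConjugate

theorem volume_shear_closedBall_prod (f : ℝ → ℝ) (hf : Measurable f) (a d L : ℝ) :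
    volume {x : ℝ × ℝ | x.1 ∈ closedBall a d ∧ x.2 ∈ closedBall (f x.1) L} =
      ENNReal.ofReal (2 * d) * ENNReal.ofReal (2 * L) := by
  set S := {x : ℝ × ℝ | x.1 ∈ closedBall a d ∧ x.2 ∈ closedBall (f x.1) L}
  have hS : MeasurableSet S :=
    (measurable_fst measurableSet_closedBall).inter
      (measurableSet_le (measurable_snd.dist (hf.comp measurable_fst)) measurable_const)
  have hfiber : ∀ x : ℝ, volume (Prod.mk x ⁻¹' S) =
      (closedBall a d).indicator (fun _ => ENNReal.ofReal (2 * L)) x := by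
    intro x
    by_cases hx : x ∈ closedBall a d
    · have : Prod.mk x ⁻¹' S = closedBall (f x) L := by
        ext; simp only [S, mem_preimage, mem_ofPred_eq, hx, true_and]
      rw [this, Real.volume_closedBall, indicator_of_mem hx]
    · have : Prod.mk x ⁻¹' S = ∅ := by
        ext; simp only [S, mem_preimage, mem_ofPred_eq, hx, false_and, mem_empty_iff_false]
      rw [this, measure_empty, indicator_of_notMem hx]
  rw [Measure.volume_eq_prod, Measure.prod_apply hS, lintegral_congr hfiber,
    lintegral_indicator_const measurableSet_closedBall, Real.volume_closedBall, mul_comm]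

theorem uC_eq_im (v : ℂ) (p : HeisC) : uC v p = (conj v * p.1).im := by
  simp only [uC, map_mul, Complex.conj_I, Complex.mul_re, Complex.mul_im, Complex.neg_re,
    Complex.neg_im, Complex.I_re, Complex.I_im, Complex.conj_re, Complex.conj_im]
  ring

theorem conj_mul_conj_rotate {v : ℂ} (hv : ‖v‖ = 1) (z w : ℂ) :
    conj (conj v * z) * (conj v * w) = conj z * w := by
  have hv1 : v * conj v = 1 := by
    rw [Complex.mul_conj, Complex.normSq_eq_norm_sq, hv]; norm_num
  rw [map_mul, Complex.conj_conj, ← one_mul (conj z * w), ← hv1]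
  ring

theorem norm_conj_mul_sub {v : ℂ} (hv : ‖v‖ = 1) (z w : ℂ) :
    ‖conj v * z - conj v * w‖ = ‖z - w‖ := by
  rw [← mul_sub, norm_mul, Complex.norm_conj, hv, one_mul]

theorem coords_le_of_dHC_le {p q : HeisC} {d : ℝ} (h : dHC p q ≤ d) :
    ‖p.1 - q.1‖ ≤ d ∧ |p.2 - q.2 - (conj q.1 * p.1).im / 2| ≤ d ^ 2 := by
  simp only [dHC, hnormC, hmulC, hinvC, max_le_iff, Real.sqrt_le_iff, map_neg, neg_mul,
    Complex.neg_im] at h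
  obtain ⟨hz, -, ht⟩ := h
  refine ⟨by rwa [sub_eq_neg_add], ?_⟩
  convert ht using 2
  ring

theorem piWcoord_mem_shear {v : ℂ} (hv : ‖v‖ = 1) {p q : HeisC} {d : ℝ}
    (h : dHC p q ≤ d) :
    (piWcoord v p).1 ∈ closedBall (piWcoord v q).1 d ∧
      (piWcoord v p).2 ∈ closedBall
        ((piWcoord v q).2 + ((piWcoord v q).1 - (piWcoord v p).1) * uC v q) (3 / 2 * d ^ 2) := by
  obtain ⟨hz, ht⟩ := coords_le_of_dHC_le h
  have hw : ‖conj v * p.1 - conj v * q.1‖ ≤ d := (norm_conj_mul_sub hv p.1 q.1).trans_le hz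
  have hcross : (conj q.1 * p.1).im =
      (conj v * q.1).re * (conj v * p.1).im - (conj v * q.1).im * (conj v * p.1).re := by
    rw [← conj_mul_conj_rotate hv, Complex.mul_im, Complex.conj_re, Complex.conj_im]
    ring
  simp only [piWcoord, sC, uC_eq_im, Real.dist_eq, mem_closedBall]
  rw [hcross] at ht
  set s := (conj v * p.1).re
  set u := (conj v * p.1).im
  set s' := (conj v * q.1).re
  set u' := (conj v * q.1).im
  have hs : |s - s'| ≤ d := (Complex.abs_re_le_norm _).trans hw
  have hu : |u - u'| ≤ d := (Complex.abs_im_le_norm _).trans hw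
  have hprod : |(s' - s) * (u - u')| ≤ d ^ 2 := by
    rw [abs_mul, abs_sub_comm, sq]
    exact mul_le_mul hs hu (abs_nonneg _) ((abs_nonneg _).trans hs)
  refine ⟨hs, ?_⟩
  calc |p.2 - s * u / 2 - (q.2 - s' * u' / 2 + (s' - s) * u')|
      = |(p.2 - q.2 - (s' * u - u' * s) / 2) + (s' - s) * (u - u') / 2| := by congr 1; ring
    _ ≤ |p.2 - q.2 - (s' * u - u' * s) / 2| + |(s' - s) * (u - u') / 2| := abs_add_le _ _
    _ ≤ d ^ 2 + d ^ 2 / 2 := by rw [abs_div, abs_two]; gcongr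
    _ = 3 / 2 * d ^ 2 := by ring

theorem dHC_le_toReal_ediamH {S : Set HeisC} (hS : ediamH S ≠ ∞) {p q : HeisC} (hp : p ∈ S)
    (hq : q ∈ S) : dHC p q ≤ (ediamH S).toReal :=
  (ENNReal.ofReal_le_iff_le_toReal hS).1 (le_iSup₂_of_le p hp (le_iSup₂_of_le q hq le_rfl))

theorem volume_piWcoord_image_le {v : ℂ} (hv : ‖v‖ = 1) (S : Set HeisC) :
    volume (piWcoord v '' S) ≤ ENNReal.ofReal 6 * ediamH S ^ 3 := by
  rcases S.eq_empty_or_nonempty with rfl | ⟨q, hq⟩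
  · simp
  rcases eq_or_ne (ediamH S) ∞ with hS | hS
  · simp [hS]
  set d := (ediamH S).toReal
  have hd : 0 ≤ d := ENNReal.toReal_nonneg
  have hsub : piWcoord v '' S ⊆ {x : ℝ × ℝ | x.1 ∈ closedBall (piWcoord v q).1 d ∧
      x.2 ∈ closedBall ((piWcoord v q).2 + ((piWcoord v q).1 - x.1) * uC v q)
        (3 / 2 * d ^ 2)} := by
    rintro _ ⟨p, hp, rfl⟩
    exact piWcoord_mem_shear hv (dHC_le_toReal_ediamH hS hp hq)
  calc volume (piWcoord v '' S)
      ≤ ENNReal.ofReal (2 * d) * ENNReal.ofReal (2 * (3 / 2 * d ^ 2)) :=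
        (measure_mono hsub).trans_eq <| volume_shear_closedBall_prod
          (fun s => (piWcoord v q).2 + ((piWcoord v q).1 - s) * uC v q) (by fun_prop) _ _ _
    _ = ENNReal.ofReal 6 * ENNReal.ofReal d ^ 3 := by
        rw [← ENNReal.ofReal_mul (by positivity), ← ENNReal.ofReal_pow hd,
          ← ENNReal.ofReal_mul (by norm_num)]
        ring_nf
    _ = ENNReal.ofReal 6 * ediamH S ^ 3 := by rw [ENNReal.ofReal_toReal hS]

theorem le_mul_H3_of_forall_cover {m c : ℝ≥0∞} (hc₀ : c ≠ 0) (hc : c ≠ ∞)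
    {A : Set HeisC}
    (h : ∀ U : ℕ → Set HeisC, A ⊆ ⋃ n, U n → m ≤ c * ∑' n, ediamH (U n) ^ 3) :
    m ≤ c * H3 A := by
  rw [mul_comm, ← ENNReal.div_le_iff hc₀ hc]
  refine le_iSup₂_of_le 1 one_pos (le_iInf fun U => le_iInf fun hU => le_iInf fun _ => ?_)
  rw [ENNReal.div_le_iff hc₀ hc, mul_comm]
  exact h U hU

/-- There is a constant `C < ∞` such that for every vertical subgroup `W` of `ℍ` and every
set `A ⊆ ℍ`, the Lebesgue measure of the vertical projection satisfies
`ℒ²(π_W(A)) ≤ C · ℋ³(A)`, where `ℋ³` is the 3-dimensional Hausdorff measure for `d_ℍ`. -/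
theorem vertical_projection_measure_bound :
    ∃ C : ℝ, 0 < C ∧ ∀ (v : ℂ), ‖v‖ = 1 → ∀ A : Set HeisC,
      volume (piWcoord v '' A) ≤ ENNReal.ofReal C * H3 A := by
  refine ⟨6, by norm_num, fun v hv A =>
    le_mul_H3_of_forall_cover (by simp) ofReal_ne_top fun U hU => ?_⟩
  calc volume (piWcoord v '' A)
      ≤ volume (⋃ n, piWcoord v '' U n) := measure_mono ((image_mono hU).trans image_iUnion.le)
    _ ≤ ∑' n, volume (piWcoord v '' U n) := measure_iUnion_le _
    _ ≤ ∑' n, ENNReal.ofReal 6 * ediamH (U n) ^ 3 :=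
        ENNReal.tsum_le_tsum fun n => volume_piWcoord_image_le hv (U n)
    _ = ENNReal.ofReal 6 * ∑' n, ediamH (U n) ^ 3 := ENNReal.tsum_mul_left
end

section
/- Let K ⊂ ℝ² be a 1-rectifiable set with 0 < ℋ¹(K) < ∞. Then there exists a set G ⊆ S¹ of full ℋ¹-measure in S¹ such that for every ℋ¹-measurable subset F ⊆ K with ℋ¹(F) > 0 and every e ∈ G, the orthogonal projection π_e(F) = {x·e : x ∈ F} has positive ℋ¹-measure. -/
/-!
Cover `K`, up to a null set, by Lipschitz curves `fₙ`. By Fubini, for almost every direction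
`e` the parameters `t` with `0 ≠ fₙ'(t) ⊥ e` form a null set for every `n`; these directions
make up `G`, which therefore does not depend on `F`. If `ℋ¹(F) > 0`, then `F ∩ fₙ(ℝ) = fₙ(A)`
has positive measure for some `n`. Discarding from `A` the points of nondifferentiability, the
parameters with `0 ≠ fₙ' ⊥ e`, and the critical points (whose image is null by the
one-dimensional Sard lemma) leaves a non-null set on which `t ↦ ⟪fₙ t, e⟫` has nonzero
derivative, and such a map cannot send a non-null set onto a null one.
-/

open MeasureTheory Set Filter Topology Asymptotics
open scoped NNReal ENNReal Real RealInnerProductSpace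

theorem exists_monotone_iUnion_eq_of_eventually {α : Type*} [PseudoMetricSpace α] {s : Set α}
    {R : α → α → Prop} (h : ∀ t ∈ s, ∀ᶠ u in 𝓝[s] t, R u t) :
    ∃ W : ℕ → Set α, Monotone W ∧ ⋃ m, W m = s ∧
      ∀ m, ∀ t ∈ W m, ∀ u ∈ s, dist u t < (m + 1 : ℝ)⁻¹ → R u t := by
  refine ⟨fun m => {t ∈ s | ∀ u ∈ s, dist u t < (m + 1 : ℝ)⁻¹ → R u t}, ?_, ?_,
    fun m t ht => ht.2⟩
  · intro m m' hm t ⟨ht, hR⟩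
    refine ⟨ht, fun u hu hut => hR u hu (hut.trans_le ?_)⟩
    gcongr
  · refine Subset.antisymm (iUnion_subset fun m t ht => ht.1) fun t ht => ?_
    obtain ⟨ε, hε, hR⟩ := Metric.eventually_nhds_iff.1 (eventually_nhdsWithin_iff.1 (h t ht))
    obtain ⟨m, hm⟩ := exists_nat_one_div_lt hε
    exact mem_iUnion.2 ⟨m, ht, fun u hu hut => hR (hut.trans (by simpa using hm)) hu⟩

theorem tsum_measure_inter_Ico_zsmul (μ : Measure ℝ) (A : Set ℝ) {δ : ℝ} (hδ : 0 < δ) :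
    ∑' j : ℤ, μ (A ∩ Ico (j • δ) ((j + 1) • δ)) = μ A := by
  have hdisj := pairwise_disjoint_Ico_add_zsmul (0 : ℝ) δ
  simp only [zero_add] at hdisj
  calc ∑' j : ℤ, μ (A ∩ Ico (j • δ) ((j + 1) • δ))
      = ∑' j : ℤ, μ.restrict (Ico (j • δ) ((j + 1) • δ)) A := by
        simp only [Measure.restrict_apply' measurableSet_Ico]
    _ = μ.restrict (⋃ j : ℤ, Ico (j • δ) ((j + 1) • δ)) A := by
        rw [Measure.restrict_iUnion hdisj fun _ => measurableSet_Ico,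
          Measure.sum_apply_of_countable]
    _ = μ A := by rw [iUnion_Ico_zsmul hδ, Measure.restrict_univ]

theorem dist_lt_of_mem_Ico_zsmul {δ u v : ℝ} {j : ℤ}
    (hu : u ∈ Ico (j • δ) ((j + 1) • δ)) (hv : v ∈ Ico (j • δ) ((j + 1) • δ)) :
    dist u v < δ := by
  rw [Real.dist_eq, abs_sub_lt_iff]
  simp only [mem_Ico, add_smul, one_smul] at hu hv
  constructor <;> linarith

theorem hausdorffMeasure_image_le_of_isBigOWith {E : Type*} [NormedAddCommGroup E]
    [MeasurableSpace E] [BorelSpace E] {f : ℝ → E} {s : Set ℝ} {c : ℝ≥0}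
    (hf : ∀ t ∈ s, IsBigOWith c (𝓝[s] t) (fun u => f u - f t) fun u => u - t) :
    μH[1] (f '' s) ≤ c * volume s := by
  obtain ⟨W, hW, hWs, hR⟩ := exists_monotone_iUnion_eq_of_eventually
    (R := fun u t => ‖f u - f t‖ ≤ c * ‖u - t‖) fun t ht => (hf t ht).bound
  rw [← hWs, image_iUnion, Monotone.measure_iUnion fun _ _ h => image_mono (hW h)]
  refine iSup_le fun m => ?_
  set δ : ℝ := (m + 1 : ℝ)⁻¹
  have hδ : 0 < δ := by positivity
  set I : ℤ → Set ℝ := fun j => Ico (j • δ) ((j + 1) • δ)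
  have hlip : ∀ j, LipschitzOnWith c f (W m ∩ I j) := fun j =>
    LipschitzOnWith.of_dist_le_mul fun u hu v hv => by
      simpa only [dist_eq_norm] using
        hR m v hv.1 u (hWs ▸ subset_iUnion W m hu.1) (dist_lt_of_mem_Ico_zsmul hu.2 hv.2)
  calc μH[1] (f '' W m) = μH[1] (⋃ j, f '' (W m ∩ I j)) := by
        rw [← image_iUnion, ← inter_iUnion, iUnion_Ico_zsmul hδ, inter_univ]
    _ ≤ ∑' j, μH[1] (f '' (W m ∩ I j)) := measure_iUnion_le _
    _ ≤ ∑' j, c * volume (W m ∩ I j) := by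
        refine ENNReal.tsum_le_tsum fun j => ?_
        simpa [hausdorffMeasure_real] using (hlip j).hausdorffMeasure_image_le zero_le_one
    _ = c * volume (W m) := by
        rw [ENNReal.tsum_mul_left, tsum_measure_inter_Ico_zsmul _ _ hδ]
    _ ≤ c * volume (⋃ m, W m) := by gcongr; exact subset_iUnion W m

theorem hausdorffMeasure_image_eq_zero_of_hasDerivWithinAt_zero {E : Type*}
    [NormedAddCommGroup E] [NormedSpace ℝ E] [MeasurableSpace E] [BorelSpace E]
    {f : ℝ → E} {s : Set ℝ} (hf : ∀ t ∈ s, HasDerivWithinAt f 0 s t) :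
    μH[1] (f '' s) = 0 := by
  rw [← inter_univ s, ← Metric.iUnion_ball_nat 0, inter_iUnion, image_iUnion]
  refine measure_iUnion_null fun n => ?_
  set s' := s ∩ Metric.ball 0 n
  have hfin : volume s' ≠ ∞ :=
    ((measure_mono inter_subset_right).trans_lt measure_ball_lt_top).ne
  have hle : ∀ c : ℝ≥0, 0 < c → μH[1] (f '' s') ≤ c * volume s' := fun c hc =>
    hausdorffMeasure_image_le_of_isBigOWith fun t ht => by
      have h := hasDerivWithinAt_iff_isLittleO.1 ((hf t ht.1).mono (inter_subset_left : s' ⊆ s))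
      simp only [smul_zero, sub_zero] at h
      exact h.def' hc
  have hlim : Tendsto (fun c : ℝ≥0 => (c : ℝ≥0∞) * volume s') (𝓝[>] 0) (𝓝 0) := by
    have h := ENNReal.Tendsto.mul_const (ENNReal.tendsto_coe.2
      (tendsto_id.mono_left (nhdsWithin_le_nhds (a := (0 : ℝ≥0)) (s := Ioi 0)))) (Or.inr hfin)
    simpa using h
  exact nonpos_iff_eq_zero.1 (ge_of_tendsto hlim (eventually_nhdsWithin_of_forall hle))

theorem hausdorffMeasure_le_mul_hausdorffMeasure_image {X Y : Type*} [EMetricSpace X]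
    [EMetricSpace Y] [MeasurableSpace X] [BorelSpace X] [MeasurableSpace Y] [BorelSpace Y]
    {f : X → Y} {s : Set X} {K : ℝ≥0} (hf : AntilipschitzWith K (s.domRestrict f)) {d : ℝ}
    (hd : 0 ≤ d) : μH[d] s ≤ K ^ d * μH[d] (f '' s) := by
  have hs := (isometry_subtype_coe : Isometry ((↑) : s → X)).hausdorffMeasure_image
    (Or.inl hd) univ
  have h := hf.le_hausdorffMeasure_image hd univ
  rwa [← hs, image_univ, Subtype.range_coe, image_univ, range_domRestrict] at h

theorem volume_eq_zero_of_isBigO_of_hausdorffMeasure_image_eq_zero {E : Type*}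
    [NormedAddCommGroup E] [MeasurableSpace E] [BorelSpace E] {p : ℝ → E} {s : Set ℝ}
    (hp : ∀ t ∈ s, (fun u => u - t) =O[𝓝[s] t] fun u => p u - p t)
    (h0 : μH[1] (p '' s) = 0) : volume s = 0 := by
  set S : ℕ → Set ℝ := fun k =>
    {t ∈ s | IsBigOWith k (𝓝[s] t) (fun u => u - t) fun u => p u - p t}
  have hS : s ⊆ ⋃ k, S k := fun t ht => by
    obtain ⟨c, hc⟩ := (hp t ht).isBigOWith
    obtain ⟨k, hk⟩ := exists_nat_ge c
    exact mem_iUnion.2 ⟨k, ht, hc.weaken hk⟩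
  refine measure_mono_null hS (measure_iUnion_null fun k => ?_)
  obtain ⟨W, -, hWS, hR⟩ := exists_monotone_iUnion_eq_of_eventually
    (s := S k) (R := fun u t => ‖u - t‖ ≤ k * ‖p u - p t‖) fun t ht =>
      ht.2.bound.filter_mono (nhdsWithin_mono _ (sep_subset _ _))
  rw [← hWS]
  refine measure_iUnion_null fun m => ?_
  set δ : ℝ := (m + 1 : ℝ)⁻¹
  rw [← inter_univ (W m), ← iUnion_Ico_zsmul (by positivity : 0 < δ), inter_iUnion]
  refine measure_iUnion_null fun j => ?_
  set T := W m ∩ Ico (j • δ) ((j + 1) • δ)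
  have hTs : T ⊆ s := fun t ht => (hWS ▸ subset_iUnion W m ht.1).1
  have hanti : AntilipschitzWith k (T.domRestrict p) :=
    AntilipschitzWith.of_le_mul_dist fun ⟨u, hu⟩ ⟨v, hv⟩ => by
      simpa only [Subtype.dist_eq, dist_eq_norm, domRestrict_apply, NNReal.coe_natCast] using
        hR m v hv.1 u (hWS ▸ subset_iUnion W m hu.1) (dist_lt_of_mem_Ico_zsmul hu.2 hv.2)
  refine nonpos_iff_eq_zero.1 ?_
  calc volume T = μH[1] T := by rw [hausdorffMeasure_real]
    _ ≤ (k : ℝ≥0) ^ (1 : ℝ) * μH[1] (p '' T) :=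
        hausdorffMeasure_le_mul_hausdorffMeasure_image hanti zero_le_one
    _ = 0 := by rw [measure_mono_null (image_mono hTs) h0, mul_zero]

theorem volume_eq_zero_of_hasDerivWithinAt_ne_zero {F : Type*} [NormedAddCommGroup F]
    [NormedSpace ℝ F] [MeasurableSpace F] [BorelSpace F] {p p' : ℝ → F} {s : Set ℝ}
    (hp : ∀ t ∈ s, HasDerivWithinAt p (p' t) s t) (hp' : ∀ t ∈ s, p' t ≠ 0)
    (h0 : μH[1] (p '' s) = 0) : volume s = 0 :=
  volume_eq_zero_of_isBigO_of_hausdorffMeasure_image_eq_zero (fun t ht =>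
    ((hp t ht).isTheta_sub (hp' t ht)).isBigO_symm.comp_tendsto
      (tendsto_id.prodMk tendsto_const_pure)) h0

theorem LipschitzWith.hausdorffMeasure_image_eq_zero {X : Type*} [EMetricSpace X]
    [MeasurableSpace X] [BorelSpace X] {f : ℝ → X} {K : ℝ≥0} (hf : LipschitzWith K f)
    {s : Set ℝ} (hs : volume s = 0) : μH[1] (f '' s) = 0 := by
  have h := hf.hausdorffMeasure_image_le zero_le_one s
  rwa [hausdorffMeasure_real, hs, mul_zero, nonpos_iff_eq_zero] at h

noncomputable def dirVec (θ : ℝ) : EuclideanSpace ℝ (Fin 2) := !₂[Real.cos θ, Real.sin θ]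

theorem inner_dirVec (w : EuclideanSpace ℝ (Fin 2)) (θ : ℝ) :
    ⟪w, dirVec θ⟫ = w 0 * Real.cos θ + w 1 * Real.sin θ := by
  simp [dirVec, PiLp.inner_apply, Fin.sum_univ_two, mul_comm]

theorem norm_dirVec (θ : ℝ) : ‖dirVec θ‖ = 1 := by
  simp [EuclideanSpace.norm_eq, dirVec, Fin.sum_univ_two]

theorem hasDerivAt_dirVec (θ : ℝ) : HasDerivAt dirVec (dirVec (θ + π / 2)) θ := by
  have h : HasDerivAt (fun θ => ![Real.cos θ, Real.sin θ]) ![-Real.sin θ, Real.cos θ] θ := by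
    refine hasDerivAt_pi.2 fun i => ?_
    fin_cases i
    · simpa using Real.hasDerivAt_cos θ
    · simpa using Real.hasDerivAt_sin θ
  rw [show dirVec (θ + π / 2) = !₂[-Real.sin θ, Real.cos θ] by
    simp [dirVec, Real.cos_add_pi_div_two, Real.sin_add_pi_div_two]]
  exact (PiLp.continuousLinearEquiv 2 ℝ fun _ : Fin 2 => ℝ).symm.hasFDerivAt.comp_hasDerivAt
    θ h

theorem lipschitzWith_dirVec : LipschitzWith 1 dirVec :=
  lipschitzWith_of_nnnorm_deriv_le (fun θ => (hasDerivAt_dirVec θ).differentiableAt) fun θ => by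
    rw [(hasDerivAt_dirVec θ).deriv, ← NNReal.coe_le_coe, coe_nnnorm, norm_dirVec]
    rfl

theorem exists_dirVec_eq {v : EuclideanSpace ℝ (Fin 2)} (hv : ‖v‖ = 1) :
    ∃ θ, dirVec θ = v := by
  set z : ℂ := ⟨v 0, v 1⟩
  have hz : ‖z‖ = 1 := by
    rw [← hv, EuclideanSpace.norm_eq, Complex.norm_def, Complex.normSq_mk, Fin.sum_univ_two]
    simp [sq]
  have hz0 : z ≠ 0 := norm_ne_zero_iff.1 (hz ▸ one_ne_zero)
  refine ⟨z.arg, ?_⟩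
  ext i
  fin_cases i <;> simp [dirVec, Complex.cos_arg hz0, Complex.sin_arg, hz, z]

theorem volume_setOf_inner_dirVec_eq_zero {w : EuclideanSpace ℝ (Fin 2)} (hw : w ≠ 0) :
    volume {θ | ⟪w, dirVec θ⟫ = 0} = 0 := by
  refine volume_eq_zero_of_hasDerivWithinAt_ne_zero (p := fun θ => ⟪w, dirVec θ⟫)
    (p' := fun θ => ⟪w, dirVec (θ + π / 2)⟫)
    (fun θ _ =>
      ((innerSL ℝ w).hasFDerivAt.comp_hasDerivAt θ (hasDerivAt_dirVec θ)).hasDerivWithinAt)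
    (fun θ hθ hθ' => hw ?_) ?_
  · simp only [mem_ofPred_eq, inner_dirVec, Real.cos_add_pi_div_two,
      Real.sin_add_pi_div_two] at hθ hθ'
    ext i
    fin_cases i
    · simp only [Fin.zero_eta, Fin.isValue, PiLp.zero_apply]
      linear_combination Real.cos θ * hθ - Real.sin θ * hθ' - w 0 * Real.sin_sq_add_cos_sq θ
    · simp only [Fin.mk_one, Fin.isValue, PiLp.zero_apply]
      linear_combination Real.sin θ * hθ + Real.cos θ * hθ' - w 1 * Real.sin_sq_add_cos_sq θ
  · refine measure_mono_null (image_subset_iff.2 fun θ hθ => mem_singleton_iff.2 hθ) ?_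
    rw [hausdorffMeasure_real]
    exact measure_singleton 0

theorem ae_volume_setOf_inner_dirVec_eq_zero {v : ℝ → EuclideanSpace ℝ (Fin 2)}
    (hv : Measurable v) : ∀ᵐ θ, volume {t | v t ≠ 0 ∧ ⟪v t, dirVec θ⟫ = 0} = 0 := by
  set S : Set (ℝ × ℝ) := {q | v q.2 ≠ 0 ∧ ⟪v q.2, dirVec q.1⟫ = 0}
  have hS : MeasurableSet S :=
    ((measurableSet_singleton 0).compl.preimage (hv.comp measurable_snd)).inter
      (measurableSet_eq_fun ((hv.comp measurable_snd).inner
        (lipschitzWith_dirVec.continuous.measurable.comp measurable_fst)) measurable_const)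
  have hS0 : volume.prod volume S = 0 := by
    rw [Measure.prod_apply_symm hS]
    have hsection : ∀ t, volume ((fun θ => (θ, t)) ⁻¹' S) = 0 := fun t => by
      by_cases hvt : v t = 0
      · simp [S, hvt]
      · exact measure_mono_null (fun θ hθ => hθ.2) (volume_setOf_inner_dirVec_eq_zero hvt)
    simp [hsection]
  exact Measure.measure_ae_null_of_prod_null hS0

theorem LipschitzWith.hausdorffMeasure_inner_image_pos {E : Type*} [NormedAddCommGroup E]
    [InnerProductSpace ℝ E] [FiniteDimensional ℝ E] [MeasurableSpace E] [BorelSpace E]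
    {g : ℝ → E} {K : ℝ≥0} (hg : LipschitzWith K g) {e : E}
    (he : volume {t | deriv g t ≠ 0 ∧ ⟪deriv g t, e⟫ = 0} = 0) {A : Set ℝ}
    (hA : 0 < μH[1] (g '' A)) : 0 < μH[1] ((fun x => ⟪x, e⟫) '' (g '' A)) := by
  set N := {t | ¬DifferentiableAt ℝ g t} ∪ {t | deriv g t ≠ 0 ∧ ⟪deriv g t, e⟫ = 0}
  set Z := {t ∈ A | HasDerivAt g 0 t}
  set A₁ := {t ∈ A | DifferentiableAt ℝ g t ∧ ⟪deriv g t, e⟫ ≠ 0}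
  have hN : μH[1] (g '' N) = 0 :=
    hg.hausdorffMeasure_image_eq_zero (measure_union_null hg.ae_differentiableAt he)
  have hZ : μH[1] (g '' Z) = 0 :=
    hausdorffMeasure_image_eq_zero_of_hasDerivWithinAt_zero fun t ht => ht.2.hasDerivWithinAt
  have hcover : A ⊆ N ∪ Z ∪ A₁ := by
    intro t ht
    by_cases hd : DifferentiableAt ℝ g t
    · by_cases hi : ⟪deriv g t, e⟫ = 0
      · by_cases h0 : deriv g t = 0
        · exact Or.inl (Or.inr ⟨ht, h0 ▸ hd.hasDerivAt⟩)
        · exact Or.inl (Or.inl (Or.inr ⟨h0, hi⟩))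
      · exact Or.inr ⟨ht, hd, hi⟩
    · exact Or.inl (Or.inl (Or.inl hd))
  have hA₁ : volume A₁ ≠ 0 := fun h0 => by
    refine hA.ne' (measure_mono_null (image_mono hcover) ?_)
    rw [image_union, image_union]
    exact measure_union_null (measure_union_null hN hZ) (hg.hausdorffMeasure_image_eq_zero h0)
  have hproj : μH[1] ((fun t => ⟪g t, e⟫) '' A₁) ≠ 0 := fun h0 => hA₁ <|
    volume_eq_zero_of_hasDerivWithinAt_ne_zero (p' := fun t => ⟪deriv g t, e⟫)
      (fun t ht => (((innerSL ℝ).flip e).hasFDerivAt.comp_hasDerivAt t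
        ht.2.1.hasDerivAt).hasDerivWithinAt)
      (fun t ht => ht.2.2) h0
  refine pos_iff_ne_zero.2 fun h0 => hproj (measure_mono_null ?_ h0)
  rw [image_image]
  exact image_mono (sep_subset _ _)

theorem exists_pos_measure_inter_of_measure_diff_iUnion_eq_zero {α ι : Type*} [Countable ι]
    [MeasurableSpace α] {μ : Measure α} {F K : Set α} {S : ι → Set α} (hFK : F ⊆ K)
    (hK : μ (K \ ⋃ i, S i) = 0) (hF : 0 < μ F) : ∃ i, 0 < μ (F ∩ S i) := by
  by_contra! h
  refine hF.ne' (measure_mono_null (t := (K \ ⋃ i, S i) ∪ ⋃ i, F ∩ S i) (fun x hx => ?_)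
    (measure_union_null hK (measure_iUnion_null fun i => nonpos_iff_eq_zero.1 (h i))))
  by_cases hS : x ∈ ⋃ i, S i
  · obtain ⟨i, hi⟩ := mem_iUnion.1 hS
    exact Or.inr (mem_iUnion.2 ⟨i, hx, hi⟩)
  · exact Or.inl ⟨hFK hx, hS⟩

theorem projection_lemma_general (K : Set (EuclideanSpace ℝ (Fin 2)))
    (hrect : ∃ f : ℕ → ℝ → EuclideanSpace ℝ (Fin 2),
      (∀ n, ∃ C : NNReal, LipschitzWith C (f n)) ∧
      μH[1] (K \ ⋃ n, Set.range (f n)) = 0) :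
    ∃ G : Set (EuclideanSpace ℝ (Fin 2)),
      G ⊆ {e | ‖e‖ = 1} ∧
      μH[1] ({e : EuclideanSpace ℝ (Fin 2) | ‖e‖ = 1} \ G) = 0 ∧
      ∀ F ⊆ K, MeasurableSet F → 0 < μH[1] F →
        ∀ e ∈ G, 0 < μH[1] ((fun x => (inner ℝ x e : ℝ)) '' F) := by
  obtain ⟨f, hf, hK⟩ := hrect
  choose C hC using hf
  set Θ := {θ | ∀ n,
    volume {t | deriv (f n) t ≠ 0 ∧ ⟪deriv (f n) t, dirVec θ⟫ = 0} = 0}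
  have hΘ : volume Θᶜ = 0 :=
    ae_all_iff.2 fun n => ae_volume_setOf_inner_dirVec_eq_zero (measurable_deriv (f n))
  refine ⟨dirVec '' Θ, ?_, ?_, ?_⟩
  · rintro _ ⟨θ, -, rfl⟩
    exact norm_dirVec θ
  · refine measure_mono_null (fun e ⟨he, heΘ⟩ => ?_)
      (lipschitzWith_dirVec.hausdorffMeasure_image_eq_zero hΘ)
    obtain ⟨θ, rfl⟩ := exists_dirVec_eq he
    exact ⟨θ, fun hθ => heΘ ⟨θ, hθ, rfl⟩, rfl⟩
  · rintro F hFK - hF _ ⟨θ, hθ, rfl⟩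
    obtain ⟨n, hn⟩ := exists_pos_measure_inter_of_measure_diff_iUnion_eq_zero hFK hK hF
    rw [← image_preimage_eq_inter_range] at hn
    exact ((hC n).hausdorffMeasure_inner_image_pos (hθ n) hn).trans_le
      (measure_mono (image_mono (image_preimage_subset _ _)))

/-- Let `K ⊂ ℝ²` be a 1-rectifiable set with `0 < ℋ¹(K) < ∞`.  Then there is a set of
directions `G ⊆ S¹` of full `ℋ¹`-measure in `S¹` such that for every `ℋ¹`-measurable
`F ⊆ K` with `ℋ¹(F) > 0` and every `e ∈ G`, the orthogonal projection
`π_e(F) = {x·e : x ∈ F}` has positive `ℋ¹`-measure. -/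
theorem projection_lemma (K : Set (EuclideanSpace ℝ (Fin 2)))
    (hrect : ∃ f : ℕ → ℝ → EuclideanSpace ℝ (Fin 2),
      (∀ n, ∃ C : NNReal, LipschitzWith C (f n)) ∧
      μH[1] (K \ ⋃ n, Set.range (f n)) = 0)
    (hpos : 0 < μH[1] K) (hfin : μH[1] K < ⊤) :
    ∃ G : Set (EuclideanSpace ℝ (Fin 2)),
      G ⊆ {e | ‖e‖ = 1} ∧
      μH[1] ({e : EuclideanSpace ℝ (Fin 2) | ‖e‖ = 1} \ G) = 0 ∧
      ∀ F ⊆ K, MeasurableSet F → 0 < μH[1] F →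
        ∀ e ∈ G, 0 < μH[1] ((fun x => (inner ℝ x e : ℝ)) '' F) :=
  projection_lemma_general K hrect
end

section
/- Let φ : ℝ² → ℝ be locally Lipschitz, let c ∈ ℝ, and let B ⊂ ℝ² have Lebesgue measure zero. Define γ_t(s) = (s, (c/2)s² + φ(0,t)s + t). Then for almost every t ∈ ℝ, one has γ_t(s) ∉ B for almost every s ∈ ℝ. -/
/-!
Write `ψ t = φ (0, t)` and `g_s t = (c/2) s² + ψ t · s + t`, so that `γ_t(s) = (s, g_s t)`.
By Fubini it suffices that the shear `(s, t) ↦ (s, g_s t)` pulls null sets back to null sets,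
which holds as soon as `g_s` does so for almost every `s`. By Rademacher, `g_s' = ψ' s + 1`
exists almost everywhere, and the degenerate sets `{ψ' s + 1 = 0}` are pairwise disjoint in `s`,
hence null for all but countably many `s`. Where `g_s'` exists and is nonzero, `g_s` is locally
anti-Lipschitz, and an anti-Lipschitz map cannot send a set of positive (Hausdorff) measure into
a null set.
-/

open MeasureTheory Set Filter Topology
open scoped NNReal ENNReal

section Hausdorff

variable {X Y : Type*} [MetricSpace X] [MeasurableSpace X] [BorelSpace X]
  [MetricSpace Y] [MeasurableSpace Y] [BorelSpace Y] {f : X → Y} {s : Set X} {d : ℝ}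

theorem le_hausdorffMeasure_image_of_le_mul_dist (hd : 0 ≤ d) {K : ℝ≥0}
    (h : ∀ x ∈ s, ∀ y ∈ s, dist x y ≤ K * dist (f x) (f y)) :
    μH[d] s ≤ (K : ℝ≥0∞) ^ d * μH[d] (f '' s) := by
  have hanti : AntilipschitzWith K (s.domRestrict f) :=
    AntilipschitzWith.of_le_mul_dist fun x y => h x x.2 y y.2
  have := hanti.le_hausdorffMeasure_image hd univ
  rwa [image_univ, range_domRestrict, ← isometry_subtype_coe.hausdorffMeasure_image (Or.inl hd),
    image_univ, Subtype.range_coe] at this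

variable [SecondCountableTopology X]

theorem hausdorffMeasure_null_of_image_null_of_le_mul_dist (hd : 0 ≤ d) {r : ℝ} {K : ℝ≥0}
    (hr : 0 < r) (h : ∀ x ∈ s, ∀ y ∈ s, dist x y < r → dist x y ≤ K * dist (f x) (f y))
    (hs : μH[d] (f '' s) = 0) : μH[d] s = 0 := by
  refine measure_null_of_locally_null s fun x _ =>
    ⟨s ∩ Metric.ball x (r / 2),
      inter_mem_nhdsWithin s (Metric.ball_mem_nhds x (half_pos hr)), ?_⟩
  refine le_zero_iff.1 <| (le_hausdorffMeasure_image_of_le_mul_dist hd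
    fun y hy z hz => h y hy.1 z hz.1 ?_).trans ?_
  · have := dist_triangle_left y z x
    have hy' := Metric.mem_ball'.1 hy.2
    have hz' := Metric.mem_ball'.1 hz.2
    linarith
  · rw [measure_mono_null (image_mono inter_subset_left) hs, mul_zero]

theorem hausdorffMeasure_null_of_image_null_of_eventually_le_mul_dist (hd : 0 ≤ d)
    (h : ∀ x ∈ s, ∃ K : ℝ, ∀ᶠ y in 𝓝 x, dist y x ≤ K * dist (f y) (f x))
    (hs : μH[d] (f '' s) = 0) : μH[d] s = 0 := by
  set S : ℕ × ℕ → Set X := fun mn =>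
    {x ∈ s | ∀ y, dist y x < 1 / (mn.1 + 1) → dist y x ≤ mn.2 * dist (f y) (f x)}
  have hcover : s ⊆ ⋃ mn, S mn := by
    intro x hx
    obtain ⟨K, hK⟩ := h x hx
    obtain ⟨ε, hε, hball⟩ := Metric.eventually_nhds_iff.1 hK
    obtain ⟨m, hm⟩ := exists_nat_one_div_lt hε
    obtain ⟨n, hn⟩ := exists_nat_ge K
    refine mem_iUnion.2 ⟨(m, n), hx, fun y hy => (hball (hy.trans hm)).trans ?_⟩
    exact mul_le_mul_of_nonneg_right hn dist_nonneg
  refine measure_mono_null hcover (measure_iUnion_null fun mn => ?_)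
  exact hausdorffMeasure_null_of_image_null_of_le_mul_dist hd (K := mn.2) Nat.one_div_pos_of_nat
    (fun x hx y hy hxy => hy.2 x hxy) (measure_mono_null (image_mono fun x hx => hx.1) hs)

end Hausdorff

theorem Real.volume_null_of_image_null_of_hasDerivAt_ne_zero {g : ℝ → ℝ} {s : Set ℝ}
    (hg : ∀ x ∈ s, ∃ a ≠ 0, HasDerivAt g a x) (hs : volume (g '' s) = 0) :
    volume s = 0 := by
  rw [← hausdorffMeasure_real] at hs ⊢
  refine hausdorffMeasure_null_of_image_null_of_eventually_le_mul_dist zero_le_one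
    (fun x hx => ?_) hs
  obtain ⟨a, ha, hga⟩ := hg x hx
  obtain ⟨K, hK⟩ := (hga.isTheta_sub ha).isBigO_symm.bound
  rw [prod_pure, eventually_map] at hK
  exact ⟨K, hK⟩

theorem Real.quasiMeasurePreserving_of_ae_hasDerivAt_ne_zero {g : ℝ → ℝ} (hg : Measurable g)
    (h : ∀ᵐ t, ∃ a ≠ 0, HasDerivAt g a t) : Measure.QuasiMeasurePreserving g := by
  refine ⟨hg, Measure.AbsolutelyContinuous.mk fun N hN hN0 => ?_⟩
  rw [Measure.map_apply hg hN]
  have hgood : volume (g ⁻¹' N ∩ {t | ∃ a ≠ 0, HasDerivAt g a t}) = 0 :=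
    Real.volume_null_of_image_null_of_hasDerivAt_ne_zero (fun t ht => ht.2)
      (measure_mono_null (by rintro _ ⟨t, ht, rfl⟩; exact ht.1) hN0)
  have hsplit : g ⁻¹' N ⊆ (g ⁻¹' N ∩ {t | ∃ a ≠ 0, HasDerivAt g a t}) ∪
      {t | ¬∃ a ≠ 0, HasDerivAt g a t} :=
    fun t ht => (em _).imp (fun h' => ⟨ht, h'⟩) id
  exact measure_mono_null hsplit (measure_union_null hgood (ae_iff.1 h))

theorem LocallyLipschitz.ae_differentiableAt {E F : Type*} [NormedAddCommGroup E]
    [NormedSpace ℝ E] [FiniteDimensional ℝ E] [MeasurableSpace E] [BorelSpace E]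
    [NormedAddCommGroup F] [NormedSpace ℝ F] [FiniteDimensional ℝ F]
    (μ : Measure E) [μ.IsAddHaarMeasure] {f : E → F} (hf : LocallyLipschitz f) :
    ∀ᵐ x ∂μ, DifferentiableAt ℝ f x := by
  refine measure_null_of_locally_null _ fun x _ => ?_
  obtain ⟨K, U, hU, hfU⟩ := hf x
  refine ⟨_ ∩ interior U, inter_mem_nhdsWithin _ (interior_mem_nhds.2 hU), ?_⟩
  rw [measure_eq_zero_iff_ae_notMem]
  filter_upwards [(hfU.mono interior_subset).ae_differentiableWithinAt_of_mem (μ := μ)]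
    with y hy ⟨hyf, hyU⟩
  exact hyf ((hy hyU).differentiableAt (isOpen_interior.mem_nhds hyU))

namespace MeasureTheory.Measure

theorem ae_measure_level_set_eq_zero {α β : Type*} [MeasurableSpace α]
    [MeasurableSpace β] [MeasurableSingletonClass β] {μ : Measure α} [SFinite μ]
    {ν : Measure β} [NullSingletonClass ν] {h : α → β} (hh : Measurable h) :
    ∀ᵐ b ∂ν, μ {a | h a = b} = 0 :=
  measure_mono_null (fun _ hb => pos_iff_ne_zero.2 hb)
    ((countable_meas_level_set_pos hh).measure_zero ν)

theorem quasiMeasurePreserving_skewProduct {α β γ : Type*} [MeasurableSpace α]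
    [MeasurableSpace β] [MeasurableSpace γ] {μ : Measure α} {ν : Measure β} {ρ : Measure γ}
    [SFinite ν] [SFinite ρ] {G : α → β → γ} (hG : Measurable (Function.uncurry G))
    (h : ∀ᵐ a ∂μ, QuasiMeasurePreserving (G a) ν ρ) :
    QuasiMeasurePreserving (fun p : α × β => (p.1, G p.1 p.2)) (μ.prod ν) (μ.prod ρ) := by
  have hm : Measurable fun p : α × β => (p.1, G p.1 p.2) := measurable_fst.prodMk hG
  refine ⟨hm, AbsolutelyContinuous.mk fun S hS hS0 => ?_⟩
  rw [map_apply hm hS, measure_prod_null (hm hS)]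
  filter_upwards [(measure_prod_null hS).1 hS0, h] with a ha hGa
  exact hGa.preimage_null ha

end MeasureTheory.Measure

theorem LocallyLipschitz.ae_quasiMeasurePreserving_add_mul_add {ψ : ℝ → ℝ}
    (hψ : LocallyLipschitz ψ) (b : ℝ → ℝ) :
    ∀ᵐ s, Measure.QuasiMeasurePreserving (fun t => b s + ψ t * s + t) := by
  have hψc : Continuous ψ := hψ.continuous
  -- `ψ' t * s + 1 = 0` forces `s = -(ψ' t)⁻¹`: the degenerate sets are level sets.
  filter_upwards [Measure.ae_measure_level_set_eq_zero (μ := volume)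
    (measurable_deriv ψ).inv.neg] with s hs
  refine Real.quasiMeasurePreserving_of_ae_hasDerivAt_ne_zero
    (by fun_prop : Continuous _).measurable ?_
  filter_upwards [hψ.ae_differentiableAt volume, measure_eq_zero_iff_ae_notMem.1 hs]
    with t hψt hts
  refine ⟨deriv ψ t * s + 1, fun h0 => hts ?_, ?_⟩
  · have hd : deriv ψ t ≠ 0 := fun hd => by simp [hd] at h0
    change -(deriv ψ t)⁻¹ = s
    field_simp
    linarith
  · exact ((hψt.hasDerivAt.mul_const s).const_add _).add (hasDerivAt_id t)

/-- Let `φ : ℝ² → ℝ` be locally Lipschitz, `c ∈ ℝ`, and let `B ⊂ ℝ²` be Lebesgue-null.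
With the characteristic curves `γ_t(s) = (s, (c/2)s² + φ(0,t)s + t)`, for almost every
`t ∈ ℝ` one has `γ_t(s) ∉ B` for almost every `s ∈ ℝ`. -/
theorem characteristics_avoid_null_set (φ : ℝ × ℝ → ℝ) (hφ : LocallyLipschitz φ)
    (c : ℝ) (B : Set (ℝ × ℝ)) (hB : volume B = 0) :
    ∀ᵐ t : ℝ, ∀ᵐ s : ℝ,
      ((s, c / 2 * s ^ 2 + φ (0, t) * s + t) : ℝ × ℝ) ∉ B := by
  have hψ : LocallyLipschitz fun t => φ (0, t) := hφ.comp (LocallyLipschitz.prodMk_left 0)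
  have hφc := hφ.continuous
  have hshear := (Measure.quasiMeasurePreserving_skewProduct (μ := volume) (ν := volume)
    (ρ := volume) (G := fun s t => c / 2 * s ^ 2 + φ (0, t) * s + t)
    (by fun_prop : Continuous _).measurable
    (hψ.ae_quasiMeasurePreserving_add_mul_add fun s => c / 2 * s ^ 2)).comp
    Measure.measurePreserving_swap.quasiMeasurePreserving
  exact Measure.ae_ae_of_ae_prod (hshear.ae (measure_eq_zero_iff_ae_notMem.1 hB))
end

section
/- Let {(A_j, B_j)} be a countable family of pairs of measurable subsets of ℝ² with A_j ⊂ B_j and 0 < ℒ²(A_j), ℒ²(B_j∖A_j) < ∞, such that the family {A_j, B_j} is dyadic (any two of the sets are either disjoint or nested) and such that whenever B_j ⊊ B_{j'}, either B_j ⊂ A_{j'} or B_j ∩ A_{j'} = ∅. Then the one-dimensional subspaces V_{A_j,B_j} ⊂ L²(ℝ²) are pairwise orthogonal, and hence for every f ∈ L², Σ_j [ℒ²(A_j)ℒ²(B_j)/ℒ²(B_j∖A_j)]·(𝔼_{A_j} f − 𝔼_{B_j} f)² ≤ ‖f‖₂². -/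
open MeasureTheory

/-- The unit vector `e_{A,B}` spanning the one-dimensional space `V_{A,B}` of `L²`
functions vanishing outside `B`, constant on `A` and on `B∖A`, with zero integral. -/
noncomputable def eAB (A B : Set (ℝ × ℝ)) (x : ℝ × ℝ) : ℝ :=
  Set.indicator A (fun _ => Real.sqrt ((volume (B \ A)).toReal /
      ((volume A).toReal * (volume B).toReal))) x -
  Set.indicator (B \ A) (fun _ => Real.sqrt ((volume A).toReal /
      ((volume B).toReal * (volume (B \ A)).toReal))) x

/-- The average of `f` over `U`. -/
noncomputable def avg (U : Set (ℝ × ℝ)) (f : ℝ × ℝ → ℝ) : ℝ :=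
  (∫ x in U, f x) / (volume U).toReal

/-! `e_{A,B}` is a unit vector of `L²` with zero integral that vanishes off `B` and is constant on
`A` and on `B ∖ A`; its inner product with `f` is `√(ℒ²(A)ℒ²(B)/ℒ²(B∖A)) (𝔼_A f − 𝔼_B f)`.
For two pairs with `B_j ≠ B_k`, either the `B`'s are disjoint, or the smaller one, say `B_j`, lies
in `A_k` or in `B_k ∖ A_k`; in every case `e_{A_k,B_k}` is constant on `B_j`, so
`⟨e_j, e_k⟩ = c ∫ e_j = 0`. Bessel's inequality for this orthonormal family gives the bound. -/

section L2

variable {α : Type*} [MeasurableSpace α] {μ : Measure α}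

theorem MeasureTheory.MemLp.inner_toLp_toLp {f g : α → ℝ} (hf : MemLp f 2 μ)
    (hg : MemLp g 2 μ) : inner ℝ (hf.toLp f) (hg.toLp g) = ∫ x, f x * g x ∂μ := by
  rw [L2.inner_def]
  refine integral_congr_ae ?_
  filter_upwards [hf.coeFn_toLp, hg.coeFn_toLp] with x hfx hgx
  simp [hfx, hgx, mul_comm]

theorem tsum_sq_integral_mul_le_integral_sq {ι : Type*} {e : ι → α → ℝ}
    (he : ∀ i, MemLp (e i) 2 μ) (hnorm : ∀ i, ∫ x, e i x * e i x ∂μ = 1)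
    (horth : Pairwise fun i j => ∫ x, e i x * e j x ∂μ = 0) {f : α → ℝ} (hf : MemLp f 2 μ) :
    ∑' i, (∫ x, e i x * f x ∂μ) ^ 2 ≤ ∫ x, f x ^ 2 ∂μ := by
  classical
  have hon : Orthonormal ℝ fun i => (he i).toLp (e i) := by
    rw [orthonormal_iff_ite]
    intro i j
    rw [MemLp.inner_toLp_toLp]
    split_ifs with hij
    · exact hij ▸ hnorm i
    · exact horth hij
  have := hon.tsum_inner_products_le (hf.toLp f)
  simpa only [MemLp.inner_toLp_toLp, Real.norm_eq_abs, sq_abs, ← real_inner_self_eq_norm_sq,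
    ← sq] using this

theorem integral_mul_eq_zero_of_eqOn {e g : α → ℝ} {s : Set α} {c : ℝ}
    (he : ∀ x ∉ s, e x = 0) (hg : s.EqOn g fun _ => c) (he₀ : ∫ x, e x ∂μ = 0) :
    ∫ x, e x * g x ∂μ = 0 := by
  have : (fun x => e x * g x) = fun x => e x * c := by
    ext x
    by_cases hx : x ∈ s
    · rw [hg hx]
    · rw [he x hx, zero_mul, zero_mul]
  rw [this, integral_mul_const, he₀, zero_mul]

theorem MeasureTheory.MemLp.integrableOn_of_measure_ne_top {E : Type*} [NormedAddCommGroup E]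
    {p : ENNReal} {f : α → E} (hf : MemLp f p μ) (hp : 1 ≤ p) {s : Set α} (hs : μ s ≠ ⊤) :
    IntegrableOn f s μ := by
  have : IsFiniteMeasure (μ.restrict s) := ⟨by simpa using hs.lt_top⟩
  exact memLp_one_iff_integrable.1 ((hf.restrict s).mono_exponent hp)

end L2

noncomputable def eABWeight (A B : Set (ℝ × ℝ)) : ℝ :=
  (volume A).toReal * (volume B).toReal / (volume (B \ A)).toReal

section eAB

variable {A B : Set (ℝ × ℝ)}

theorem eABWeight_pos (hAB : A ⊆ B) (hA : 0 < volume A) (hBA : 0 < volume (B \ A))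
    (hB : volume B < ⊤) : 0 < eABWeight A B := by
  have := ENNReal.toReal_pos hA.ne' (measure_ne_top_of_subset hAB hB.ne)
  have := ENNReal.toReal_pos (measure_pos_of_superset hAB hA.ne').ne' hB.ne
  have := ENNReal.toReal_pos hBA.ne' (measure_ne_top_of_subset Set.sdiff_subset hB.ne)
  unfold eABWeight
  positivity

theorem eAB_eq_indicator_sub_indicator :
    eAB A B = A.indicator (fun _ => (√(eABWeight A B))⁻¹) -
      (B \ A).indicator (fun _ => √(eABWeight A B) / (volume B).toReal) := by
  have hA : √((volume (B \ A)).toReal / ((volume A).toReal * (volume B).toReal)) =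
      (√(eABWeight A B))⁻¹ := by
    rw [eABWeight, ← Real.sqrt_inv, inv_div]
  have hBA : √((volume A).toReal / ((volume B).toReal * (volume (B \ A)).toReal)) =
      √(eABWeight A B) / (volume B).toReal := by
    rw [← Real.sqrt_sq (ENNReal.toReal_nonneg (a := volume B)), ← Real.sqrt_div' _ (sq_nonneg _),
      Real.sqrt_sq ENNReal.toReal_nonneg, eABWeight]
    congr 1
    rcases eq_or_ne (volume B).toReal 0 with h | h
    · simp [h]
    · field_simp
  ext x
  rw [eAB, hA, hBA, Pi.sub_apply]

theorem eAB_apply_of_mem {x : ℝ × ℝ} (hx : x ∈ A) : eAB A B x = (√(eABWeight A B))⁻¹ := by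
  rw [eAB_eq_indicator_sub_indicator, Pi.sub_apply, Set.indicator_of_mem hx,
    Set.indicator_of_notMem fun h => h.2 hx, sub_zero]

theorem eAB_apply_of_mem_sdiff {x : ℝ × ℝ} (hx : x ∈ B \ A) :
    eAB A B x = -(√(eABWeight A B) / (volume B).toReal) := by
  rw [eAB_eq_indicator_sub_indicator, Pi.sub_apply, Set.indicator_of_notMem hx.2,
    Set.indicator_of_mem hx, zero_sub]

theorem eAB_apply_of_notMem (hAB : A ⊆ B) {x : ℝ × ℝ} (hx : x ∉ B) : eAB A B x = 0 := by
  rw [eAB, Set.indicator_of_notMem (fun h => hx (hAB h)),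
    Set.indicator_of_notMem (fun h => hx h.1), sub_zero]

theorem exists_eqOn_eAB_const {S : Set (ℝ × ℝ)} (hAB : A ⊆ B)
    (hS : S ⊆ A ∨ S ⊆ B \ A ∨ Disjoint S B) : ∃ c, S.EqOn (eAB A B) fun _ => c := by
  rcases hS with hS | hS | hS
  · exact ⟨_, fun x hx => eAB_apply_of_mem (hS hx)⟩
  · exact ⟨_, fun x hx => eAB_apply_of_mem_sdiff (hS hx)⟩
  · exact ⟨0, fun x hx => eAB_apply_of_notMem hAB (Set.disjoint_left.1 hS hx)⟩

theorem memLp_eAB (hmA : MeasurableSet A) (hmB : MeasurableSet B) (hAB : A ⊆ B)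
    (hB : volume B < ⊤) : MemLp (eAB A B) 2 volume :=
  (memLp_indicator_const 2 hmA _ (.inr (measure_ne_top_of_subset hAB hB.ne))).sub
    (memLp_indicator_const 2 (hmB.diff hmA) _
      (.inr (measure_ne_top_of_subset Set.sdiff_subset hB.ne)))

theorem integral_eAB_mul (hmA : MeasurableSet A) (hmB : MeasurableSet B) (hAB : A ⊆ B)
    {f : ℝ × ℝ → ℝ} (hf : IntegrableOn f B) :
    ∫ x, eAB A B x * f x = (√(eABWeight A B))⁻¹ * (∫ x in A, f x) -
      √(eABWeight A B) / (volume B).toReal * ∫ x in B \ A, f x := by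
  simp_rw [eAB_eq_indicator_sub_indicator, Pi.sub_apply, sub_mul, ← Set.indicator_mul_left]
  rw [integral_sub ((integrable_indicator_iff hmA).2 ((hf.mono_set hAB).const_mul _))
      ((integrable_indicator_iff (hmB.diff hmA)).2 ((hf.mono_set Set.sdiff_subset).const_mul _)),
    integral_indicator hmA, integral_indicator (hmB.diff hmA), integral_const_mul,
    integral_const_mul]

theorem integral_eAB_mul_eq_mul_avg_sub_avg (hmA : MeasurableSet A) (hmB : MeasurableSet B)
    (hAB : A ⊆ B) (hA : 0 < volume A) (hBA : 0 < volume (B \ A)) (hB : volume B < ⊤)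
    {f : ℝ × ℝ → ℝ} (hf : IntegrableOn f B) :
    ∫ x, eAB A B x * f x = √(eABWeight A B) * (avg A f - avg B f) := by
  have hA' : 0 < (volume A).toReal :=
    ENNReal.toReal_pos hA.ne' (measure_ne_top_of_subset hAB hB.ne)
  have hBA' : 0 < (volume (B \ A)).toReal :=
    ENNReal.toReal_pos hBA.ne' (measure_ne_top_of_subset Set.sdiff_subset hB.ne)
  have hB_eq : (volume A).toReal + (volume (B \ A)).toReal = (volume B).toReal := by
    simpa only [measureReal_def, Set.union_eq_right.2 hAB] using
      measureReal_add_sdiff (μ := volume) hmA (measure_ne_top_of_subset hAB hB.ne) hB.ne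
  have hw : √(eABWeight A B) ^ 2 * (volume (B \ A)).toReal =
      (volume A).toReal * (volume B).toReal := by
    rw [Real.sq_sqrt (eABWeight_pos hAB hA hBA hB).le, eABWeight]
    field_simp
  have hs : √(eABWeight A B) ≠ 0 := (Real.sqrt_pos.2 (eABWeight_pos hAB hA hBA hB)).ne'
  have key : (√(eABWeight A B))⁻¹ + √(eABWeight A B) / (volume B).toReal =
      √(eABWeight A B) / (volume A).toReal := by
    rw [← hB_eq] at hw ⊢
    field_simp
    linear_combination -hw
  rw [integral_eAB_mul hmA hmB hAB hf, setIntegral_sdiff hmA hf hAB, avg, avg]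
  linear_combination (∫ x in A, f x) * key

theorem avg_const {U : Set (ℝ × ℝ)} (hU₀ : volume U ≠ 0) (hU : volume U ≠ ⊤) (c : ℝ) :
    avg U (fun _ => c) = c := by
  rw [avg, setIntegral_const, smul_eq_mul, measureReal_def,
    mul_div_cancel_left₀ _ (ENNReal.toReal_ne_zero.2 ⟨hU₀, hU⟩)]

theorem integral_eAB (hmA : MeasurableSet A) (hmB : MeasurableSet B) (hAB : A ⊆ B)
    (hA : 0 < volume A) (hBA : 0 < volume (B \ A)) (hB : volume B < ⊤) :
    ∫ x, eAB A B x = 0 := by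
  have h := integral_eAB_mul_eq_mul_avg_sub_avg hmA hmB hAB hA hBA hB
    (integrableOn_const (C := 1) hB.ne)
  rw [avg_const hA.ne' (measure_ne_top_of_subset hAB hB.ne),
    avg_const (measure_pos_of_superset hAB hA.ne').ne' hB.ne, sub_self, mul_zero] at h
  simpa only [mul_one] using h

theorem integral_eAB_mul_self (hmA : MeasurableSet A) (hmB : MeasurableSet B) (hAB : A ⊆ B)
    (hA : 0 < volume A) (hBA : 0 < volume (B \ A)) (hB : volume B < ⊤) :
    ∫ x, eAB A B x * eAB A B x = 1 := by
  have hA_avg : avg A (eAB A B) = (√(eABWeight A B))⁻¹ := by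
    rw [avg, setIntegral_congr_fun hmA fun x hx => eAB_apply_of_mem hx]
    exact avg_const hA.ne' (measure_ne_top_of_subset hAB hB.ne) _
  have hB_avg : avg B (eAB A B) = 0 := by
    rw [avg, setIntegral_eq_integral_of_forall_compl_eq_zero fun x => eAB_apply_of_notMem hAB,
      integral_eAB hmA hmB hAB hA hBA hB, zero_div]
  rw [integral_eAB_mul_eq_mul_avg_sub_avg hmA hmB hAB hA hBA hB
      ((memLp_eAB hmA hmB hAB hB).integrableOn_of_measure_ne_top one_le_two hB.ne),
    hA_avg, hB_avg, sub_zero, mul_inv_cancel₀ (Real.sqrt_pos.2 (eABWeight_pos hAB hA hBA hB)).ne']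

theorem integral_eAB_mul_eAB_eq_zero {A' B' : Set (ℝ × ℝ)} (hmA' : MeasurableSet A')
    (hmB' : MeasurableSet B') (hAB' : A' ⊆ B') (hA' : 0 < volume A')
    (hBA' : 0 < volume (B' \ A')) (hB' : volume B' < ⊤) (hAB : A ⊆ B)
    (hB'AB : B' ⊆ A ∨ B' ⊆ B \ A ∨ Disjoint B' B) :
    ∫ x, eAB A' B' x * eAB A B x = 0 := by
  obtain ⟨c, hc⟩ := exists_eqOn_eAB_const hAB hB'AB
  exact integral_mul_eq_zero_of_eqOn (fun x => eAB_apply_of_notMem hAB') hc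
    (integral_eAB hmA' hmB' hAB' hA' hBA' hB')

end eAB

/-- Let `(A_j, B_j)` be a countable family of pairs of measurable subsets of `ℝ²` with
`A_j ⊆ B_j`, `0 < ℒ²(A_j)`, `0 < ℒ²(B_j∖A_j)`, `ℒ²(B_j) < ∞`, such that the family of all
the sets `A_j, B_j` is dyadic (any two are disjoint or nested), the `B_j` are distinct, and
whenever `B_j ⊊ B_{j'}` one has `B_j ⊆ A_{j'}` or `B_j ∩ A_{j'} = ∅`.  Then the lines
`V_{A_j,B_j}` are pairwise orthogonal in `L²(ℝ²)`, and by Bessel's inequality, for every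
`f ∈ L²`, `Σ_j [ℒ²(A_j)ℒ²(B_j)/ℒ²(B_j∖A_j)]·(𝔼_{A_j}f − 𝔼_{B_j}f)² ≤ ‖f‖₂²`. -/
theorem dyadic_family_orthogonality_bessel (A B : ℕ → Set (ℝ × ℝ))
    (hmA : ∀ j, MeasurableSet (A j)) (hmB : ∀ j, MeasurableSet (B j))
    (hAB : ∀ j, A j ⊆ B j)
    (hA0 : ∀ j, 0 < volume (A j)) (hBA0 : ∀ j, 0 < volume (B j \ A j))
    (hBfin : ∀ j, volume (B j) < ⊤)
    (hdyadic : ∀ S ∈ {S | ∃ j, S = A j ∨ S = B j},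
      ∀ T ∈ {S | ∃ j, S = A j ∨ S = B j}, Disjoint S T ∨ S ⊆ T ∨ T ⊆ S)
    (hBinj : Function.Injective B)
    (hnest : ∀ j j', B j ⊆ B j' → B j ≠ B j' → B j ⊆ A j' ∨ Disjoint (B j) (A j')) :
    (∀ j k, j ≠ k → (∫ x, eAB (A j) (B j) x * eAB (A k) (B k) x) = 0) ∧
    ∀ f : ℝ × ℝ → ℝ, MemLp f 2 volume →
      (∑' j, (volume (A j)).toReal * (volume (B j)).toReal / (volume (B j \ A j)).toReal *
        (avg (A j) f - avg (B j) f) ^ 2) ≤ ∫ x, (f x) ^ 2 := by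
  have hnested : ∀ j k, B j ⊆ B k → B j ≠ B k →
      ∫ x, eAB (A j) (B j) x * eAB (A k) (B k) x = 0 := fun j k hsub hne =>
    integral_eAB_mul_eAB_eq_zero (hmA j) (hmB j) (hAB j) (hA0 j) (hBA0 j) (hBfin j) (hAB k)
      ((hnest j k hsub hne).imp_right fun hd => .inl (Set.subset_sdiff.2 ⟨hsub, hd⟩))
  have horth : Pairwise fun j k => ∫ x, eAB (A j) (B j) x * eAB (A k) (B k) x = 0 := by
    intro j k hjk
    rcases hdyadic (B j) ⟨j, .inr rfl⟩ (B k) ⟨k, .inr rfl⟩ with hd | hsub | hsub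
    · exact integral_eAB_mul_eAB_eq_zero (hmA j) (hmB j) (hAB j) (hA0 j) (hBA0 j) (hBfin j)
        (hAB k) (.inr (.inr hd))
    · exact hnested j k hsub (hBinj.ne hjk)
    · simpa only [mul_comm] using hnested k j hsub (hBinj.ne hjk).symm
  refine ⟨horth, fun f hf => ?_⟩
  calc ∑' j, (volume (A j)).toReal * (volume (B j)).toReal / (volume (B j \ A j)).toReal *
        (avg (A j) f - avg (B j) f) ^ 2
      = ∑' j, (∫ x, eAB (A j) (B j) x * f x) ^ 2 := by
        refine tsum_congr fun j => ?_
        rw [integral_eAB_mul_eq_mul_avg_sub_avg (hmA j) (hmB j) (hAB j) (hA0 j) (hBA0 j) (hBfin j)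
            (hf.integrableOn_of_measure_ne_top one_le_two (hBfin j).ne),
          mul_pow, Real.sq_sqrt (eABWeight_pos (hAB j) (hA0 j) (hBA0 j) (hBfin j)).le, eABWeight]
    _ ≤ ∫ x, f x ^ 2 :=
        tsum_sq_integral_mul_le_integral_sq (fun j => memLp_eAB (hmA j) (hmB j) (hAB j) (hBfin j))
          (fun j => integral_eAB_mul_self (hmA j) (hmB j) (hAB j) (hA0 j) (hBA0 j) (hBfin j))
          horth hf
end
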